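/- Let G be a nontrivial strongly connected directed graph with N nodes, girth g, and cyclicity c. For every node i of G and every integer n that is a multiple of c and satisfies n ≥ 2Ng/c − g/c − 2g + c, there exists a closed path of length n starting at i. -/

import Mathlib

namespace Transients

variable {V : Type*}

/-- A walk of length `n` in the graph with edge relation `E`, given by its node
sequence `p 0, p 1, …, p n`. -/
def IsWalk (E : V → V → Prop) (n : ℕ) (p : ℕ → V) : Prop :=
  ∀ k, k < n → E (p k) (p (k + 1))

/-- A closed walk: start node equals end node. -/
def IsClosedWalk (E : V → V → Prop) (n : ℕ) (p : ℕ → V) : Prop :=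
  IsWalk E n p ∧ p 0 = p n

/-- A nonempty elementary closed walk: closed, and no node repeats except start = end. -/
def IsElemClosedWalk (E : V → V → Prop) (n : ℕ) (p : ℕ → V) : Prop :=
  0 < n ∧ IsClosedWalk E n p ∧ ∀ k l, k < n → l < n → p k = p l → k = l

/-- A simple walk: no node is visited twice. -/
def IsSimpleWalk (E : V → V → Prop) (n : ℕ) (p : ℕ → V) : Prop :=
  IsWalk E n p ∧ ∀ k l, k ≤ n → l ≤ n → p k = p l → k = l

def StronglyConnected (E : V → V → Prop) : Prop :=
  ∀ i j : V, ∃ n p, IsWalk E n p ∧ p 0 = i ∧ p n = j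

def NontrivialGraph (E : V → V → Prop) : Prop := ∃ i j, E i j

/-- The weight `w_*` of a walk in an edge-weighted graph. -/
noncomputable def walkWeight (w : V → V → ℝ) (n : ℕ) (p : ℕ → V) : ℝ :=
  ∑ k ∈ Finset.range n, w (p k) (p (k + 1))

/-- The rate ρ(G): supremum of `w_*(γ)/ℓ(γ)` over nonempty closed walks γ. -/
noncomputable def rate (E : V → V → Prop) (w : V → V → ℝ) : ℝ :=
  sSup {x : ℝ | ∃ n p, 0 < n ∧ IsClosedWalk E n p ∧ x = walkWeight w n p / n}

/-- A critical closed walk: nonempty, closed, and its weight is ρ(G) times its length. -/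
def IsCriticalWalk (E : V → V → Prop) (w : V → V → ℝ) (n : ℕ) (p : ℕ → V) : Prop :=
  0 < n ∧ IsClosedWalk E n p ∧ walkWeight w n p = rate E w * n

/-- A critical node: lies on some critical closed walk. -/
def CriticalNode (E : V → V → Prop) (w : V → V → ℝ) (i : V) : Prop :=
  ∃ n p k, IsCriticalWalk E w n p ∧ k ≤ n ∧ p k = i

/-- A critical edge: lies on some critical closed walk. -/
def CriticalEdge (E : V → V → Prop) (w : V → V → ℝ) (i j : V) : Prop :=
  ∃ n p k, IsCriticalWalk E w n p ∧ k < n ∧ p k = i ∧ p (k + 1) = j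

/-- The non-critical rate ρ_nc(G): supremum of mean weights of nonempty closed walks
containing no critical node. -/
noncomputable def ncRate (E : V → V → Prop) (w : V → V → ℝ) : ℝ :=
  sSup {x : ℝ | ∃ n p, 0 < n ∧ IsClosedWalk E n p ∧
    (∀ k, k ≤ n → ¬ CriticalNode E w (p k)) ∧ x = walkWeight w n p / n}

/-- Δ(G), the maximum edge weight. -/
noncomputable def maxWeight (E : V → V → Prop) (w : V → V → ℝ) : ℝ :=
  sSup {x : ℝ | ∃ i j, E i j ∧ x = w i j}

/-- δ(G), the minimum edge weight. -/
noncomputable def minWeight (E : V → V → Prop) (w : V → V → ℝ) : ℝ :=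
  sInf {x : ℝ | ∃ i j, E i j ∧ x = w i j}

open Classical in
/-- Δ_nc(G), the maximum weight of an edge joining two non-critical nodes
(ρ(G) if there is no such edge). -/
noncomputable def maxNcWeight (E : V → V → Prop) (w : V → V → ℝ) : ℝ :=
  if (∃ i j, E i j ∧ ¬ CriticalNode E w i ∧ ¬ CriticalNode E w j) then
    sSup {x : ℝ | ∃ i j, E i j ∧ ¬ CriticalNode E w i ∧ ¬ CriticalNode E w j ∧ x = w i j}
  else rate E w

/-- `d` is the greatest common divisor of the set `S` of naturals. -/
def IsGcdOf (d : ℕ) (S : Set ℕ) : Prop :=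
  (∀ s ∈ S, d ∣ s) ∧ ∀ e : ℕ, (∀ s ∈ S, e ∣ s) → e ∣ d

/-- The set of lengths of nonempty closed walks in the graph. -/
def ClosedLengths (E : V → V → Prop) : Set ℕ :=
  {n | 0 < n ∧ ∃ p, IsClosedWalk E n p}

/-- The set of lengths of nonempty closed walks starting at `i`. -/
def ClosedLengthsAt (E : V → V → Prop) (i : V) : Set ℕ :=
  {n | 0 < n ∧ ∃ p, IsWalk E n p ∧ p 0 = i ∧ p n = i}

/-- There is a (possibly empty) closed walk of length `n` starting at `i`. -/
def HasClosedWalkAt (E : V → V → Prop) (i : V) (n : ℕ) : Prop :=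
  ∃ p, IsWalk E n p ∧ p 0 = i ∧ p n = i

/-- cd(G), the cab driver's diameter: the maximum length of simple walks. -/
noncomputable def cabDiameter (E : V → V → Prop) : ℕ :=
  sSup {n | ∃ p, IsSimpleWalk E n p}

/-- cr(G), the circumference: the maximum length of nonempty elementary closed walks. -/
noncomputable def circumference (E : V → V → Prop) : ℕ :=
  sSup {n | ∃ p, IsElemClosedWalk E n p}

/-- `g` is the girth of the graph: the minimum length of nonempty elementary closed walks. -/
def IsGirth (E : V → V → Prop) (g : ℕ) : Prop :=
  IsLeast {n | ∃ p, IsElemClosedWalk E n p} g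

/-- `ep` is the exploration penalty of a graph of cyclicity `c`: the least `m` such that
for every node `i` and every multiple `n` of `c` with `n ≥ m` there is a closed walk
of length `n` starting at `i`. -/
def IsEp (E : V → V → Prop) (c ep : ℕ) : Prop :=
  IsLeast {m | ∀ i : V, ∀ n : ℕ, c ∣ n → m ≤ n → HasClosedWalkAt E i n} ep

/-- `i` and `j` lie in the same strongly connected component of the graph. -/
def SameComp (E : V → V → Prop) (i j : V) : Prop :=
  (∃ n p, IsWalk E n p ∧ p 0 = i ∧ p n = j) ∧ (∃ n p, IsWalk E n p ∧ p 0 = j ∧ p n = i)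

/-- `m` is the exploration penalty of the strongly connected component of `k`
(a component of cyclicity `c`). -/
def IsCompEp (E : V → V → Prop) (k : V) (c m : ℕ) : Prop :=
  IsLeast {m' | ∀ i : V, SameComp E k i → ∀ n : ℕ, c ∣ n → m' ≤ n → HasClosedWalkAt E i n} m

/-- Max-plus matrix product. -/
noncomputable def mpMul {N : ℕ} (A B : Matrix (Fin N) (Fin N) (WithBot ℝ)) :
    Matrix (Fin N) (Fin N) (WithBot ℝ) :=
  fun i j => Finset.univ.sup fun k => A i k + B k j

/-- Max-plus matrix power, `A^{⊗n}`. -/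
noncomputable def mpPow {N : ℕ} (A : Matrix (Fin N) (Fin N) (WithBot ℝ)) :
    ℕ → Matrix (Fin N) (Fin N) (WithBot ℝ)
  | 0 => fun i j => if i = j then (0 : WithBot ℝ) else ⊥
  | n + 1 => mpMul A (mpPow A n)

/-- Max-plus matrix-vector product. -/
noncomputable def mpVec {N : ℕ} (A : Matrix (Fin N) (Fin N) (WithBot ℝ))
    (v : Fin N → WithBot ℝ) : Fin N → WithBot ℝ :=
  fun i => Finset.univ.sup fun j => A i j + v j

/-- The edge relation of the weighted graph `G(A)`. -/
def mEdge {N : ℕ} (A : Matrix (Fin N) (Fin N) (WithBot ℝ)) : Fin N → Fin N → Prop :=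
  fun i j => A i j ≠ ⊥

/-- The edge weights of the weighted graph `G(A)`. -/
noncomputable def mWeight {N : ℕ} (A : Matrix (Fin N) (Fin N) (WithBot ℝ)) :
    Fin N → Fin N → ℝ :=
  fun i j => (A i j).unbotD 0

/-- `A` is irreducible: `G(A)` is strongly connected and has at least one edge. -/
def MPIrreducible {N : ℕ} (A : Matrix (Fin N) (Fin N) (WithBot ℝ)) : Prop :=
  StronglyConnected (mEdge A) ∧ NontrivialGraph (mEdge A)

/-- The linear max-plus system `x(n) = A^{⊗n} ⊗ v`. -/
noncomputable def mpSystem {N : ℕ} (A : Matrix (Fin N) (Fin N) (WithBot ℝ)) (v : Fin N → ℝ)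
    (n : ℕ) : Fin N → WithBot ℝ :=
  mpVec (mpPow A n) fun j => (v j : WithBot ℝ)

/-- The set of indices from which the system `x_{A,v}` is periodic with increment
`p·ρ(A)`; its least element is the transient `n_{A,v}`. -/
noncomputable def SysTransientSet {N : ℕ} (A : Matrix (Fin N) (Fin N) (WithBot ℝ))
    (v : Fin N → ℝ) : Set ℕ :=
  {n₀ | ∃ p : ℕ, 0 < p ∧ ∀ n, n₀ ≤ n → ∀ i,
    mpSystem A v (n + p) i
      = mpSystem A v n i + ((p * rate (mEdge A) (mWeight A) : ℝ) : WithBot ℝ)}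

/-- The set of indices from which the powers of `A` are periodic with increment
`p·ρ(A)`; its least element is the transient `n_A`. -/
noncomputable def MatTransientSet {N : ℕ} (A : Matrix (Fin N) (Fin N) (WithBot ℝ)) : Set ℕ :=
  {n₀ | ∃ p : ℕ, 0 < p ∧ ∀ n, n₀ ≤ n → ∀ i j,
    mpPow A (n + p) i j
      = mpPow A n i j + ((p * rate (mEdge A) (mWeight A) : ℝ) : WithBot ℝ)}

/-- `‖v‖ = max_i v_i − min_i v_i`. -/
noncomputable def vnorm {N : ℕ} (v : Fin N → ℝ) : ℝ :=
  sSup (Set.range v) - sInf (Set.range v)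

/-!
Fix a cycle `C` of minimal length `g`; `c` divides `g`. A shortest walk from `i` into `C` and a
shortest walk from `C` back to `i` meet `C` only at their ends, so together with fewer than `g`
steps along `C` they form a closed walk at `i` of length `L < 2N - g`, passing through a node `x`
of `C`. Closed walks at `x` realise every residue modulo `g` that is a multiple of `c` (their
lengths modulo `g` form a group containing all closed-walk lengths of the graph), and a shortest
one with a given residue has length `< N g / c` by pigeonhole. Inserting such a walk at `x` makes
the length congruent to `n` modulo `g`, and the bound on `n` leaves room to wind around `C` until
the length is exactly `n`.
-/

section Walks

variable {E : V → V → Prop}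

def HasWalk (E : V → V → Prop) (i j : V) (n : ℕ) : Prop :=
  ∃ p, IsWalk E n p ∧ p 0 = i ∧ p n = j

theorem HasWalk.refl (i : V) : HasWalk E i i 0 :=
  ⟨fun _ => i, fun _ hk => absurd hk (Nat.not_lt_zero _), rfl, rfl⟩

theorem IsWalk.hasWalk_segment {n : ℕ} {p : ℕ → V} (hp : IsWalk E n p) {k l : ℕ}
    (hkl : k ≤ l) (hl : l ≤ n) : HasWalk E (p k) (p l) (l - k) :=
  ⟨fun t => p (t + k), fun t ht => by simpa [Nat.add_right_comm] using hp (t + k) (by omega),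
    by simp, by simp [Nat.sub_add_cancel hkl]⟩

theorem HasWalk.append {i j k : V} {a b : ℕ} (h₁ : HasWalk E i j a) (h₂ : HasWalk E j k b) :
    HasWalk E i k (a + b) := by
  obtain ⟨q, hq, rfl, rfl⟩ := h₁
  obtain ⟨r, hr, hr0, rfl⟩ := h₂
  have hsecond : ∀ t, a ≤ t → (if t ≤ a then q t else r (t - a)) = r (t - a) := by
    intro t ht
    split_ifs with h
    · obtain rfl : t = a := le_antisymm h ht
      simp [hr0]
    · rfl
  refine ⟨fun t => if t ≤ a then q t else r (t - a), fun k hk => ?_, by simp, ?_⟩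
  · rcases lt_or_ge k a with hka | hka
    · simp only [if_pos hka.le, if_pos (Nat.succ_le_of_lt hka)]
      exact hq k hka
    · show E (if k ≤ a then q k else r (k - a))
        (if k + 1 ≤ a then q (k + 1) else r (k + 1 - a))
      rw [hsecond k hka, hsecond (k + 1) (by omega), Nat.sub_add_comm hka]
      exact hr _ (by omega)
  · show (if a + b ≤ a then q (a + b) else r (a + b - a)) = r b
    rw [hsecond _ (Nat.le_add_right a b), Nat.add_sub_cancel_left]

theorem HasWalk.flip {i j : V} {n : ℕ} (h : HasWalk E i j n) : HasWalk (flip E) j i n := by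
  obtain ⟨p, hp, rfl, rfl⟩ := h
  refine ⟨fun t => p (n - t), fun k hk => ?_, by simp, by simp⟩
  have := hp (n - (k + 1)) (by omega)
  rwa [show n - (k + 1) + 1 = n - k by omega] at this

theorem IsWalk.hasWalk_cut {n : ℕ} {p : ℕ → V} (hp : IsWalk E n p) {k l : ℕ}
    (hkl : k ≤ l) (hl : l ≤ n) (heq : p k = p l) : HasWalk E (p 0) (p n) (n - (l - k)) := by
  have h := (hp.hasWalk_segment (Nat.zero_le k) (hkl.trans hl)).append
    (heq ▸ hp.hasWalk_segment hl le_rfl)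
  rwa [show k - 0 + (n - l) = n - (l - k) by omega] at h

theorem HasClosedWalkAt.mul {v : V} {m : ℕ} (h : HasClosedWalkAt E v m) (k : ℕ) :
    HasClosedWalkAt E v (m * k) := by
  induction k with
  | zero => exact HasWalk.refl v
  | succ k ih => exact HasWalk.append ih h

theorem dvd_of_hasClosedWalkAt {c : ℕ} (hc : ∀ s ∈ ClosedLengths E, c ∣ s) {v : V} {m : ℕ}
    (h : HasClosedWalkAt E v m) : c ∣ m := by
  obtain ⟨p, hp, hp0, hpm⟩ := h
  rcases Nat.eq_zero_or_pos m with rfl | hm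
  · exact dvd_zero c
  · exact hc m ⟨hm, p, hp, hp0.trans hpm.symm⟩

theorem IsClosedWalk.hasClosedWalkAt {n : ℕ} {p : ℕ → V} (hp : IsClosedWalk E n p) {k : ℕ}
    (hk : k ≤ n) : HasClosedWalkAt E (p k) n := by
  have h := (hp.2 ▸ hp.1.hasWalk_segment hk le_rfl).append
    (hp.1.hasWalk_segment (Nat.zero_le k) hk)
  rwa [show n - k + (k - 0) = n by omega] at h

theorem IsClosedWalk.exists_hasWalk_lt {n : ℕ} {p : ℕ → V} (hp : IsClosedWalk E n p)
    {k l : ℕ} (hk : k < n) (hl : l < n) : ∃ t < n, HasWalk E (p k) (p l) t := by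
  rcases le_or_gt k l with hkl | hlk
  · exact ⟨l - k, by omega, hp.1.hasWalk_segment hkl hl.le⟩
  · refine ⟨n - k + (l - 0), by omega, ?_⟩
    exact (hp.2 ▸ hp.1.hasWalk_segment hk.le le_rfl).append
      (hp.1.hasWalk_segment (Nat.zero_le l) hl.le)

/-- A shortest walk from `i` into `S` meets `S` only at its end and repeats no node. -/
theorem HasWalk.exists_add_card_le [Fintype V] {S : Finset V} {i j : V} {n : ℕ}
    (h : HasWalk E i j n) (hj : j ∈ S) :
    ∃ a, ∃ x ∈ S, HasWalk E i x a ∧ a + S.card ≤ Fintype.card V := by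
  classical
  have hex : ∃ a, ∃ x ∈ S, HasWalk E i x a := ⟨n, j, hj, h⟩
  obtain ⟨x, hxS, p, hp, hp0, hpa⟩ := Nat.find_spec hex
  refine ⟨Nat.find hex, x, hxS, ⟨p, hp, hp0, hpa⟩, ?_⟩
  have hoff : ∀ k < Nat.find hex, p k ∉ S := by
    intro k hk hkS
    have hseg := hp.hasWalk_segment (Nat.zero_le k) hk.le
    rw [hp0, Nat.sub_zero] at hseg
    exact Nat.find_min hex hk ⟨p k, hkS, hseg⟩
  have hnodup : ∀ k l, k < l → l < Nat.find hex → p k ≠ p l := by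
    intro k l hkl hl heq
    have hcut := hp.hasWalk_cut hkl.le hl.le heq
    rw [hp0, hpa] at hcut
    exact Nat.find_min hex (by omega) ⟨x, hxS, hcut⟩
  have hinj : Set.InjOn p (Finset.range (Nat.find hex)) := by
    intro k hk l hl heq
    simp only [Finset.coe_range, Set.mem_Iio] at hk hl
    by_contra hne
    rcases Nat.lt_or_gt_of_ne hne with hkl | hlk
    · exact hnodup k l hkl hl heq
    · exact hnodup l k hlk hk heq.symm
  have hdisj : Disjoint ((Finset.range (Nat.find hex)).image p) S := by
    simpa [Finset.disjoint_left] using hoff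
  calc Nat.find hex + S.card = ((Finset.range (Nat.find hex)).image p ∪ S).card := by
        rw [Finset.card_union_of_disjoint hdisj, Finset.card_image_of_injOn hinj,
          Finset.card_range]
    _ ≤ Fintype.card V := Finset.card_le_univ _

/-- Enter the cycle by a shortest walk (`a + g ≤ N`), leave it by a shortest walk (`b + g ≤ N`)
reached from the entry point `x` in `t < g` steps along the cycle, and put `l = t + b`. -/
theorem exists_hasWalk_of_isElemClosedWalk [Fintype V] (hsc : StronglyConnected E) {g : ℕ}
    {p : ℕ → V} (hp : IsElemClosedWalk E g p) (i : V) :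
    ∃ x a l, HasWalk E i x a ∧ HasWalk E x i l ∧ HasClosedWalkAt E x g ∧
      a + l + g < 2 * Fintype.card V := by
  classical
  obtain ⟨hg, hcl, hinj⟩ := hp
  set C := (Finset.range g).image p
  have hC : C.card = g := by
    rw [Finset.card_image_of_injOn, Finset.card_range]
    intro k hk l hl
    exact hinj k l (by simpa using hk) (by simpa using hl)
  have hp0 : p 0 ∈ C := Finset.mem_image_of_mem p (Finset.mem_range.mpr hg)
  obtain ⟨n₁, h₁⟩ := hsc i (p 0)
  obtain ⟨n₂, h₂⟩ := hsc (p 0) i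
  obtain ⟨a, _, hxC, hix, ha⟩ := HasWalk.exists_add_card_le (S := C) h₁ hp0
  obtain ⟨b, _, hyC, hiy, hb⟩ := HasWalk.exists_add_card_le (S := C) (HasWalk.flip h₂) hp0
  obtain ⟨k, hk, rfl⟩ := Finset.mem_image.mp hxC
  obtain ⟨l, hl, rfl⟩ := Finset.mem_image.mp hyC
  obtain ⟨t, ht, hxy⟩ := hcl.exists_hasWalk_lt (Finset.mem_range.mp hk) (Finset.mem_range.mp hl)
  exact ⟨p k, a, t + b, hix, hxy.append hiy.flip,
    hcl.hasClosedWalkAt (Finset.mem_range.mp hk).le, by omega⟩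

end Walks

section Residues

variable {E : V → V → Prop}

def closedWalkResidues (E : V → V → Prop) (v : V) (g : ℕ) [NeZero g] :
    AddSubgroup (ZMod g) where
  carrier := {x | ∃ m, HasClosedWalkAt E v m ∧ (m : ZMod g) = x}
  zero_mem' := ⟨0, HasWalk.refl v, Nat.cast_zero⟩
  add_mem' := by
    rintro _ _ ⟨m₁, h₁, rfl⟩ ⟨m₂, h₂, rfl⟩
    exact ⟨m₁ + m₂, HasWalk.append h₁ h₂, Nat.cast_add m₁ m₂⟩
  neg_mem' := by
    rintro _ ⟨m, h, rfl⟩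
    refine ⟨m * (g - 1), h.mul (g - 1), ?_⟩
    rw [Nat.cast_mul, Nat.cast_pred (NeZero.pos g), ZMod.natCast_self]
    ring

/-- A closed walk of length `s` through `u`, with detours `v ⇝ u ⇝ v`, gives closed walks at `v`
of lengths `d + e` and `d + s + e`; their difference is `s`. -/
theorem natCast_mem_closedWalkResidues (hsc : StronglyConnected E) {g : ℕ} [NeZero g] (v : V)
    {s : ℕ} (hs : s ∈ ClosedLengths E) : (s : ZMod g) ∈ closedWalkResidues E v g := by
  obtain ⟨-, q, hq, hq0⟩ := hs
  obtain ⟨d, hd⟩ := hsc v (q 0)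
  obtain ⟨e, he⟩ := hsc (q 0) v
  have hloop : HasClosedWalkAt E (q 0) s := ⟨q, hq, rfl, hq0.symm⟩
  have hshort : ((d + e : ℕ) : ZMod g) ∈ closedWalkResidues E v g :=
    ⟨_, HasWalk.append hd he, rfl⟩
  have hlong : ((d + s + e : ℕ) : ZMod g) ∈ closedWalkResidues E v g :=
    ⟨_, HasWalk.append (HasWalk.append hd hloop) he, rfl⟩
  have hdiff := sub_mem hlong hshort
  rwa [show ((d + s + e : ℕ) : ZMod g) - (d + e : ℕ) = s by push_cast; ring] at hdiff

theorem IsGcdOf.natCast_mem {c : ℕ} {S : Set ℕ} (hc : IsGcdOf c S) {H : AddSubgroup ℤ}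
    (hS : ∀ s ∈ S, (s : ℤ) ∈ H) : (c : ℤ) ∈ H := by
  obtain ⟨d, rfl⟩ := Int.subgroup_cyclic H
  simp only [← AddSubgroup.zmultiples_eq_closure, Int.mem_zmultiples_iff, Int.dvd_natCast]
    at hS ⊢
  exact hc.2 _ hS

theorem exists_hasClosedWalkAt_intCast_eq (hsc : StronglyConnected E) {c g : ℕ} [NeZero g]
    (hc : IsGcdOf c (ClosedLengths E)) (v : V) {j : ℤ} (hj : (c : ℤ) ∣ j) :
    ∃ m, HasClosedWalkAt E v m ∧ (m : ZMod g) = j := by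
  set H := (closedWalkResidues E v g).comap (Int.castAddHom (ZMod g))
  have hcH : (c : ℤ) ∈ H := hc.natCast_mem fun s hs => by
    simpa [H] using natCast_mem_closedWalkResidues hsc v hs
  obtain ⟨w, rfl⟩ := hj
  have hjH := H.zsmul_mem hcH w
  rwa [smul_eq_mul, mul_comm] at hjH

theorem mul_dvd_sub_of_div_modEq {c d k l : ℕ} (hkl : k ≤ l) (hc : c ∣ l - k)
    (h : k / c ≡ l / c [MOD d]) : c * d ∣ l - k := by
  obtain ⟨s, hs⟩ := hc
  rcases Nat.eq_zero_or_pos c with rfl | hc0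
  · simp [hs]
  have hl : l / c = k / c + s := by
    rw [show l = k + c * s by omega, Nat.add_mul_div_left _ _ hc0]
  rw [hl, Nat.modEq_iff_dvd' (Nat.le_add_right _ _), Nat.add_sub_cancel_left] at h
  rw [hs]
  exact Nat.mul_dvd_mul_left c h

/-- Along a shortest closed walk with the given residue, the pairs `(node, ⌊k / c⌋ mod d)` of
its positions `k` are distinct: a repetition encloses a closed subwalk whose length is divisible
by `c * d`, and cutting it out would give a shorter walk. -/
theorem exists_hasClosedWalkAt_natCast_eq_lt [Fintype V] {c d : ℕ} [NeZero d]
    (hc : ∀ s ∈ ClosedLengths E, c ∣ s) {v : V} {m₀ : ℕ} (h : HasClosedWalkAt E v m₀) :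
    ∃ m, HasClosedWalkAt E v m ∧ (m : ZMod (c * d)) = m₀ ∧ m < Fintype.card V * d := by
  classical
  have hex : ∃ m, HasClosedWalkAt E v m ∧ (m : ZMod (c * d)) = m₀ := ⟨m₀, h, rfl⟩
  obtain ⟨⟨p, hp, hp0, hpm⟩, hres⟩ := Nat.find_spec hex
  refine ⟨_, ⟨p, hp, hp0, hpm⟩, hres, ?_⟩
  have hsep : ∀ k l, k < l → l ≤ Nat.find hex → p k = p l → ¬ k / c ≡ l / c [MOD d] := by
    intro k l hkl hl heq hmod
    have hloop : HasClosedWalkAt E (p k) (l - k) := heq ▸ hp.hasWalk_segment hkl.le hl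
    have hdvd := mul_dvd_sub_of_div_modEq hkl.le (dvd_of_hasClosedWalkAt hc hloop) hmod
    have hcut := hp.hasWalk_cut hkl.le hl heq
    rw [hp0, hpm] at hcut
    refine Nat.find_min hex (by omega) ⟨hcut, ?_⟩
    rw [Nat.cast_sub (by omega), (ZMod.natCast_eq_zero_iff _ _).mpr hdvd, sub_zero, hres]
  by_contra! hlong
  obtain ⟨k, l, hne, hkl⟩ := Fintype.exists_ne_map_eq_of_card_lt
    (fun k : Fin (Nat.find hex + 1) => (p k, ((k / c : ℕ) : ZMod d)))
    (by simp only [Fintype.card_prod, Fintype.card_fin, ZMod.card]; omega)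
  rw [Prod.mk.injEq, ZMod.natCast_eq_natCast_iff] at hkl
  rcases Fin.lt_or_lt_of_ne hne with hlt | hlt
  · exact hsep k l hlt (Nat.lt_succ_iff.mp l.isLt) hkl.1 hkl.2
  · exact hsep l k hlt (Nat.lt_succ_iff.mp k.isLt) hkl.1.symm hkl.2.symm

/-- For `d = 1` the bound `m < N` would be too weak, but then `c * d ∣ j` and `m = 0` works. -/
theorem exists_short_hasClosedWalkAt_intCast_eq [Fintype V] (hsc : StronglyConnected E)
    {c d : ℕ} [NeZero c] [NeZero d] (hc : IsGcdOf c (ClosedLengths E)) (v : V) {j : ℤ}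
    (hj : (c : ℤ) ∣ j) :
    ∃ m, HasClosedWalkAt E v m ∧ (m : ZMod (c * d)) = j ∧
      (m = 0 ∨ 2 ≤ d ∧ m < Fintype.card V * d) := by
  rcases (by have := NeZero.pos d; omega : d = 1 ∨ 2 ≤ d) with rfl | hd2
  · refine ⟨0, HasWalk.refl v, ?_, Or.inl rfl⟩
    rwa [Nat.cast_zero, eq_comm, ZMod.intCast_zmod_eq_zero_iff_dvd, mul_one]
  · obtain ⟨m₀, hm₀, hm₀j⟩ := exists_hasClosedWalkAt_intCast_eq hsc hc v hj (g := c * d)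
    obtain ⟨m, hm, hmm₀, hmN⟩ := exists_hasClosedWalkAt_natCast_eq_lt hc.1 hm₀ (d := d)
    exact ⟨m, hm, hmm₀.trans hm₀j, Or.inr ⟨hd2, hmN⟩⟩

end Residues

theorem exists_eq_add_mul_of_natCast_eq {g x n : ℕ} (h : (x : ZMod g) = n) (hlt : x < n + g) :
    ∃ k, n = x + g * k := by
  rw [ZMod.natCast_eq_natCast_iff] at h
  have hxn : x ≤ n := by
    by_contra! hnx
    have hdvd := (Nat.modEq_iff_dvd' hnx.le).mp h.symm
    exact absurd (Nat.le_of_dvd (by omega) hdvd) (by omega)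
  obtain ⟨k, hk⟩ := (Nat.modEq_iff_dvd' hxn).mp h
  exact ⟨k, by omega⟩

theorem add_lt_add_girth_of_bound {N c d g L m n : ℕ} (hc : 0 < c) (hd : 0 < d) (hg : g = c * d)
    (hL : L + g < 2 * N) (hm : m = 0 ∨ 2 ≤ d ∧ m < N * d)
    (hn : 2 * (N : ℝ) * g / c - (g : ℝ) / c - 2 * g + c ≤ n) : L + m < n + g := by
  have hgc : (g : ℝ) / c = d := by
    rw [hg, Nat.cast_mul]
    field_simp
  rw [mul_div_assoc, hgc] at hn
  have hL' : (L : ℝ) + g + 1 ≤ 2 * N := by exact_mod_cast hL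
  have hc' : (1 : ℝ) ≤ c := by exact_mod_cast hc
  have hd' : (1 : ℝ) ≤ d := by exact_mod_cast hd
  have hg' : (g : ℝ) = c * d := by exact_mod_cast hg
  have hN : (1 : ℝ) ≤ N := by exact_mod_cast (show 1 ≤ N by omega)
  suffices (L : ℝ) + m < n + g by exact_mod_cast this
  rcases hm with rfl | ⟨hd2, hmN⟩
  · rw [Nat.cast_zero]
    nlinarith [mul_nonneg (by linarith : (0 : ℝ) ≤ 2 * N - 1) (sub_nonneg.mpr hd')]
  · have hm' : (m : ℝ) + 1 ≤ N * d := by exact_mod_cast hmN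
    have hd2' : (2 : ℝ) ≤ d := by exact_mod_cast hd2
    nlinarith [mul_nonneg (by linarith : (0 : ℝ) ≤ N - 1) (sub_nonneg.mpr hd2')]

theorem stmt_7_general {V : Type*} [Fintype V] (E : V → V → Prop)
    (hsc : StronglyConnected E)
    (c g : ℕ) (hc : IsGcdOf c (ClosedLengths E)) (hg : IsGirth E g)
    (i : V) (n : ℕ) (hdvd : c ∣ n)
    (hn : 2 * (Fintype.card V : ℝ) * g / c - (g : ℝ) / c - 2 * g + c ≤ (n : ℝ)) :
    HasClosedWalkAt E i n := by
  obtain ⟨p, hp⟩ := hg.1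
  obtain ⟨x, a, l, hix, hxi, hx, hlen⟩ := exists_hasWalk_of_isElemClosedWalk hsc hp i
  obtain ⟨d, rfl⟩ := dvd_of_hasClosedWalkAt hc.1 hx
  obtain ⟨hc0, hd0⟩ := CanonicallyOrderedAdd.mul_pos.mp hp.1
  have : NeZero d := ⟨hd0.ne'⟩
  have : NeZero c := ⟨hc0.ne'⟩
  have hj : (c : ℤ) ∣ n - (a + l : ℕ) := dvd_sub (Int.natCast_dvd_natCast.mpr hdvd)
    (Int.natCast_dvd_natCast.mpr (dvd_of_hasClosedWalkAt hc.1 (HasWalk.append hix hxi)))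
  obtain ⟨m, hm, hmj, hmN⟩ := exists_short_hasClosedWalkAt_intCast_eq hsc hc x hj (d := d)
  obtain ⟨k, rfl⟩ := exists_eq_add_mul_of_natCast_eq (x := a + l + m) (g := c * d)
    (by push_cast at hmj ⊢; rw [hmj]; ring) (add_lt_add_girth_of_bound hc0 hd0 rfl hlen hmN hn)
  have hwalk := HasWalk.append (HasWalk.append hix (HasWalk.append hm (hx.mul k))) hxi
  rwa [show a + (m + c * d * k) + l = a + l + m + c * d * k by ring] at hwalk

/-- In a nontrivial strongly connected graph with `N` nodes, girth `g`
and cyclicity `c`, every node `i` has a closed path of every length `n` that is a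
multiple of `c` and satisfies `n ≥ 2Ng/c − g/c − 2g + c`. -/
theorem stmt_7 {V : Type*} [Fintype V] (E : V → V → Prop)
    (hnt : NontrivialGraph E) (hsc : StronglyConnected E)
    (c g : ℕ) (hc : IsGcdOf c (ClosedLengths E)) (hg : IsGirth E g)
    (i : V) (n : ℕ) (hdvd : c ∣ n)
    (hn : 2 * (Fintype.card V : ℝ) * g / c - (g : ℝ) / c - 2 * g + c ≤ (n : ℝ)) :
    HasClosedWalkAt E i n :=
  stmt_7_general E hsc c g hc hg i n hdvd hn

end Transients
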